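/- arXiv:2311.00827 — 7 statements merged into one kernel-verified Lean document; each statement's English description precedes it below -/
import Mathlib

section
/- For every nonzero element a of K, the number of nonzero elements x of L satisfying Tr_{K/F}(a·x^{q^n+1}) = 0 is exactly (q^n + 1)(q^{n-1} - 1). (This is the number of nonzero vectors on the elliptic quadric Q_a; projectively Q_a has (q^n+1)(q^{n-1}-1)/(q-1) points, the point count of an elliptic quadric of PG(2n-1,q).) -/
/-!
The norm `x ↦ x ^ (q ^ n + 1)` maps `L^×` into `K^×` and the trace `z ↦ ∑ z ^ q ^ i` maps
`K` into `F`. A fibre of either map consists of roots of a polynomial of degree `q ^ n + 1`,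
resp. `q ^ (n - 1)`, and these bounds multiplied by the sizes of the targets are exactly the sizes
of the sources, so every fibre has exactly that size. Hence the trace has `q ^ (n - 1) - 1`
nonzero zeros in `K`, multiplication by `a` permutes `K^×`, and each of these zeros is the norm of
exactly `q ^ n + 1` elements of `L^×`.
-/

open Polynomial Finset

namespace Finset

variable {α β : Type*} [DecidableEq β] {s : Finset α} {t : Finset β} {f : α → β} {c : ℕ}

theorem card_fiber_eq_of_card_eq_mul (hf : (s : Set α).MapsTo f t)
    (hle : ∀ y ∈ t, #{x ∈ s | f x = y} ≤ c) (hcard : #s = #t * c) {y : β} (hy : y ∈ t) :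
    #{x ∈ s | f x = y} = c := by
  by_contra hne
  have : #s < #t * c := by
    rw [card_eq_sum_card_fiberwise hf, ← smul_eq_mul, ← sum_const]
    exact sum_lt_sum hle ⟨y, hy, (hle y hy).lt_of_ne hne⟩
  omega

theorem card_filter_mem_eq_mul {u : Finset β} (hfib : ∀ y ∈ u, #{x ∈ s | f x = y} = c) :
    #{x ∈ s | f x ∈ u} = #u * c := by
  rw [card_eq_sum_card_fiberwise (s := {x ∈ s | f x ∈ u}) (t := u)
    fun x hx ↦ (mem_filter.1 hx).2, sum_const_nat]
  intro y hy
  rw [filter_filter, ← hfib y hy]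
  congr 1
  exact filter_congr fun x _ ↦ ⟨And.right, fun h ↦ ⟨h ▸ hy, h⟩⟩

end Finset

section Roots

variable {R : Type*} [CommRing R] [IsDomain R] [DecidableEq R] (s : Finset R)

theorem card_filter_pow_eq_le {m : ℕ} (hm : 0 < m) (y : R) : #{x ∈ s | x ^ m = y} ≤ m := by
  calc #{x ∈ s | x ^ m = y} ≤ #(nthRootsFinset m y) :=
        card_le_card fun x hx ↦ (mem_nthRootsFinset hm y).2 (mem_filter.1 hx).2
    _ ≤ m := by
      rw [nthRootsFinset_def]
      exact (Multiset.toFinset_card_le _).trans (card_nthRoots m y)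

theorem card_filter_sum_pow_pow_eq_le {q : ℕ} (hq : 1 < q) (m : ℕ) (c : R) :
    #{z ∈ s | ∑ i ∈ range (m + 1), z ^ q ^ i = c} ≤ q ^ m := by
  set P : R[X] := X ^ q ^ m + (∑ i ∈ range m, X ^ q ^ i - C c)
  have hdeg : (∑ i ∈ range m, X ^ q ^ i - C c : R[X]).degree < ↑(q ^ m) := by
    refine (degree_sub_le _ _).trans_lt (max_lt ?_ ?_)
    · refine (degree_sum_le _ _).trans_lt ((Finset.sup_lt_iff (WithBot.bot_lt_coe _)).2 ?_)
      intro i hi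
      rw [degree_X_pow]
      exact_mod_cast Nat.pow_lt_pow_right hq (mem_range.1 hi)
    · exact degree_C_le.trans_lt (by exact_mod_cast pow_pos (by omega) m)
  have hP : P.Monic := monic_X_pow_add hdeg
  have hPdeg : P.natDegree = q ^ m := by
    rw [natDegree_add_eq_left_of_degree_lt (by rwa [degree_X_pow]), natDegree_X_pow]
  rw [← hPdeg]
  refine card_le_degree_of_subset_roots fun z hz ↦ ?_
  have hzc := (mem_filter.1 hz).2
  rw [sum_range_succ] at hzc
  simp only [mem_roots hP.ne_zero, IsRoot, P, eval_add, eval_sub, eval_pow, eval_X, eval_C,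
    eval_finsetSum]
  linear_combination hzc

end Roots

theorem Subfield.mem_iff_pow_card_eq_self {L : Type*} [Field L] [Finite L] (S : Subfield L)
    {x : L} : x ∈ S ↔ x ^ Nat.card S = x := by
  classical
  cases nonempty_fintype L
  have hpow : ∀ y ∈ S, y ^ Nat.card S = y := fun y hy ↦ by
    simpa [Nat.card_eq_fintype_card] using
      congrArg Subtype.val (FiniteField.pow_card (⟨y, hy⟩ : S))
  refine ⟨hpow x, fun hx ↦ ?_⟩
  by_contra hxS
  have hS : 1 < Nat.card S := Finite.one_lt_card
  -- `S` and `x` would give `Nat.card S + 1` roots of `X ^ Nat.card S - X`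
  have := card_le_degree_of_subset_roots (p := (X ^ Nat.card S - X : L[X]))
    (Z := insert x ({y | y ∈ S} : Finset L)) fun y hy ↦ ?_
  · rw [FiniteField.X_pow_card_sub_X_natDegree_eq L hS, card_insert_of_notMem (by simpa),
      ← Fintype.card_subtype, ← Nat.card_eq_fintype_card] at this
    omega
  rw [mem_roots (FiniteField.X_pow_card_sub_X_ne_zero L hS), IsRoot, eval_sub, eval_pow, eval_X,
    sub_eq_zero]
  rcases mem_insert.1 hy with rfl | hy
  · exact hx
  · exact hpow y (mem_filter.1 hy).2

section Tower

variable {L : Type*} [Field L] {F K : Subfield L} {q n : ℕ}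

theorem sum_pow_pow_mem_of_mem [Finite L] (hF : Nat.card F = q) (hK : Nat.card K = q ^ n)
    {z : L} (hz : z ∈ K) : ∑ i ∈ range n, z ^ q ^ i ∈ F := by
  classical
  cases nonempty_fintype L
  rw [Subfield.mem_iff_pow_card_eq_self, hK] at hz
  have hfrob : ∀ x : L, x ^ q = FiniteField.frobeniusAlgHom F L x := by
    simp [← hF, Nat.card_eq_fintype_card]
  -- `x ↦ x ^ q` is additive, and it permutes the terms of the sum cyclically as `z ^ q ^ n = z`
  have hshift := (sum_range_succ' (fun i ↦ z ^ q ^ i) n).symm.trans (sum_range_succ _ n)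
  simp only [pow_zero, pow_one, hz] at hshift
  rw [Subfield.mem_iff_pow_card_eq_self, hF, hfrob, map_sum]
  simp only [← hfrob, ← pow_mul, ← pow_succ]
  exact add_right_cancel hshift

theorem card_filter_sum_pow_pow_eq_zero [DecidableEq L] [Fintype L] [DecidablePred (· ∈ K)]
    (hn : n ≠ 0) (hF : Nat.card F = q) (hK : Nat.card K = q ^ n) :
    #{z | z ∈ K ∧ ∑ i ∈ range n, z ^ q ^ i = 0} = q ^ (n - 1) := by
  classical
  have hq : 1 < q := hF ▸ Finite.one_lt_card
  obtain ⟨m, rfl⟩ := Nat.exists_eq_add_one_of_ne_zero hn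
  have := card_fiber_eq_of_card_eq_mul (s := {z | z ∈ K}) (t := {y | y ∈ F}) (c := q ^ m)
    (f := fun z ↦ ∑ i ∈ range (m + 1), z ^ q ^ i) ?_ ?_ ?_ (y := 0) (by simp)
  · rw [filter_filter] at this; simpa using this
  · intro z hz
    simpa using sum_pow_pow_mem_of_mem hF hK (mem_filter.1 hz).2
  · intro y _
    exact card_filter_sum_pow_pow_eq_le _ hq m y
  · rw [← Fintype.card_subtype, ← Fintype.card_subtype, ← Nat.card_eq_fintype_card,
      ← Nat.card_eq_fintype_card, hF, hK, pow_succ']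

theorem pow_card_add_one_mem [Finite L] {Q : ℕ} (hK : Nat.card K = Q)
    (hL : Nat.card L = Q ^ 2) {x : L} (hx : x ≠ 0) : x ^ (Q + 1) ∈ K := by
  cases nonempty_fintype L
  have hQ : 0 < Q := hK ▸ Nat.card_pos
  have hunit : x ^ (Q ^ 2 - 1) = 1 := by
    rw [← hL, Nat.card_eq_fintype_card, FiniteField.pow_card_sub_one_eq_one x hx]
  rw [Subfield.mem_iff_pow_card_eq_self, hK, ← pow_mul,
    show (Q + 1) * Q = (Q ^ 2 - 1) + (Q + 1) by zify [Nat.one_le_pow 2 Q hQ]; ring,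
    pow_add, hunit, one_mul]

theorem card_filter_pow_card_add_one_mem [DecidableEq L] [Fintype L] [DecidablePred (· ∈ K)]
    {Q : ℕ} (hK : Nat.card K = Q) (hL : Nat.card L = Q ^ 2) {u : Finset L}
    (hu : ∀ y ∈ u, y ∈ K ∧ y ≠ 0) :
    #{x | x ≠ 0 ∧ x ^ (Q + 1) ∈ u} = #u * (Q + 1) := by
  rw [← filter_filter]
  refine card_filter_mem_eq_mul fun y hy ↦ card_fiber_eq_of_card_eq_mul
    (t := {y | y ∈ K ∧ y ≠ 0}) ?_ (fun y _ ↦ card_filter_pow_eq_le _ (by omega) y) ?_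
    (by simpa using hu y hy)
  · intro x hx
    have hx : x ≠ 0 := (mem_filter.1 hx).2
    simpa [hx] using pow_card_add_one_mem hK hL hx
  · have hQ : 1 ≤ Q := hK ▸ Nat.card_pos
    rw [← filter_filter, filter_ne', filter_ne', card_erase_of_mem (by simp),
      card_erase_of_mem (by simp), card_univ, ← Fintype.card_subtype,
      ← Nat.card_eq_fintype_card, ← Nat.card_eq_fintype_card, hK, hL]
    zify [hQ, Nat.one_le_pow 2 Q hQ]
    ring

end Tower

theorem stmt0_general (q n : ℕ) (hn : 2 ≤ n)
    (L : Type*) [Field L] [Finite L]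
    (F K : Subfield L)
    (hFcard : Nat.card F = q) (hKcard : Nat.card K = q ^ n)
    (hLcard : Nat.card L = q ^ (2 * n))
    (a : L) (haK : a ∈ K) (ha : a ≠ 0) :
    Set.ncard {x : L | x ≠ 0 ∧ ∑ i ∈ Finset.range n, (a * x ^ (q ^ n + 1)) ^ q ^ i = 0}
      = (q ^ n + 1) * (q ^ (n - 1) - 1) := by
  classical
  cases nonempty_fintype L
  have hq : q ≠ 0 := hFcard ▸ Nat.card_pos.ne'
  have hL : Nat.card L = (q ^ n) ^ 2 := by rw [hLcard, ← pow_mul, mul_comm]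
  set ker : Finset L := {z | z ∈ K ∧ ∑ i ∈ range n, z ^ q ^ i = 0}
  set u : Finset L := (ker.erase 0).map (Equiv.mulLeft₀ a ha).symm.toEmbedding
  have hu : ∀ y ∈ u, y ∈ K ∧ y ≠ 0 := by
    intro y hy
    simp only [u, ker, mem_map_equiv, Equiv.symm_symm, Equiv.mulLeft₀_apply, mem_erase,
      mem_filter, mem_univ, true_and] at hy
    exact ⟨by simpa [ha] using K.mul_mem (K.inv_mem haK) hy.2.1, right_ne_zero_of_mul hy.1⟩
  calc _ = #{x | x ≠ 0 ∧ x ^ (q ^ n + 1) ∈ u} := by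
        rw [Set.ncard_eq_toFinset_card', Set.toFinset_ofPred]
        refine congrArg card (filter_congr fun x _ ↦ and_congr_right fun hx ↦ ?_)
        simp [u, ker, mem_map_equiv, hx, K.mul_mem haK (pow_card_add_one_mem hKcard hL hx)]
    _ = #u * (q ^ n + 1) := card_filter_pow_card_add_one_mem hKcard hL hu
    _ = (q ^ n + 1) * (q ^ (n - 1) - 1) := by
      rw [card_map, card_erase_of_mem (by simp [ker, zero_pow, hq]),
        card_filter_sum_pow_pow_eq_zero (by omega) hFcard hKcard, mul_comm]

/-- For every nonzero `a ∈ K`, the number of nonzero `x ∈ L` with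
`Tr_{K/F}(a * x^(q^n+1)) = 0` is exactly `(q^n + 1) * (q^(n-1) - 1)`.
Here `Tr_{K/F}(z) = ∑ i < n, z^(q^i)` for `z ∈ K`. -/
theorem stmt0 (q n : ℕ) (hq : IsPrimePow q) (hn : 2 ≤ n)
    (L : Type*) [Field L] [Finite L]
    (F K : Subfield L) (hFK : F ≤ K)
    (hFcard : Nat.card F = q) (hKcard : Nat.card K = q ^ n)
    (hLcard : Nat.card L = q ^ (2 * n))
    (a : L) (haK : a ∈ K) (ha : a ≠ 0) :
    Set.ncard {x : L | x ≠ 0 ∧ ∑ i ∈ Finset.range n, (a * x ^ (q ^ n + 1)) ^ q ^ i = 0}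
      = (q ^ n + 1) * (q ^ (n - 1) - 1) :=
  stmt0_general q n hn L F K hFcard hKcard hLcard a haK ha
end

section
/- Let a ∈ K be nonzero. Then: (i) for all x, y ∈ L one has Tr_{K/F}(a·((x+y)^{q^n+1} − x^{q^n+1} − y^{q^n+1})) = Tr_{L/F}(a·x·y^{q^n}), i.e. the polar form of the quadratic form x ↦ Tr_{K/F}(a·x^{q^n+1}) is the F-bilinear form B(x,y) = Tr_{L/F}(a·x·y^{q^n}); and (ii) B is nondegenerate: if y ∈ L satisfies Tr_{L/F}(a·x·y^{q^n}) = 0 for every x ∈ L, then y = 0. -/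
/-!
Write `Q = q ^ n`. Since `a ^ Q = a` and `y ^ (Q * Q) = y`, the polar form
`a * (x * y ^ Q + x ^ Q * y)` of `a * x ^ (Q + 1)` is `u + u ^ Q` for `u = a * x * y ^ Q`, and
`Tr_{K/F}(u + u ^ Q) = Tr_{L/F}(u)` because the `n` Frobenius twists of `u` and of `u ^ Q` together
are the `2 * n` twists of `u`. For nondegeneracy, `y ≠ 0` makes `x ↦ a * x * y ^ Q` a bijection
of `L`, while `Tr_{L/F}` is a polynomial of degree `q ^ (2 * n - 1) < |L|` with nonzero linear
coefficient, so it does not vanish on all of `L`.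
-/

open Finset Polynomial

/-- For `|L| = q ^ m` this is the trace from `L` to its subfield with `q` elements. -/
def powTrace {R : Type*} [Semiring R] (q m : ℕ) (x : R) : R :=
  ∑ i ∈ range m, x ^ q ^ i

theorem powTrace_two_mul {R : Type*} [Semiring R] (q n : ℕ) (x : R) :
    powTrace q (2 * n) x = powTrace q n x + powTrace q n (x ^ q ^ n) := by
  simp only [powTrace, two_mul, sum_range_add, pow_add, pow_mul]

section ExpChar

variable {R : Type*} [CommSemiring R] (p : ℕ) [ExpChar R p]

theorem add_pow_pow_pow (k i : ℕ) (x y : R) :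
    (x + y) ^ (p ^ k) ^ i = x ^ (p ^ k) ^ i + y ^ (p ^ k) ^ i := by
  simp only [← pow_mul, add_pow_expChar_pow]

theorem powTrace_add (k m : ℕ) (x y : R) :
    powTrace (p ^ k) m (x + y) = powTrace (p ^ k) m x + powTrace (p ^ k) m y := by
  simp only [powTrace, ← sum_add_distrib, add_pow_pow_pow]

end ExpChar

theorem add_pow_succ_sub_pow_succ_sub_pow_succ {R : Type*} [CommRing R] {Q : ℕ} {x y : R}
    (h : (x + y) ^ Q = x ^ Q + y ^ Q) :
    (x + y) ^ (Q + 1) - x ^ (Q + 1) - y ^ (Q + 1) = x * y ^ Q + x ^ Q * y := by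
  rw [pow_succ, h, pow_succ, pow_succ]
  ring

theorem exists_powTrace_ne_zero {L : Type*} [Field L] [Fintype L] {q m : ℕ} (hq : 2 ≤ q)
    (hm : m ≠ 0) (hlt : q ^ (m - 1) < Fintype.card L) : ∃ z : L, powTrace q m z ≠ 0 := by
  by_contra! h
  set P : L[X] := ∑ i ∈ range m, X ^ q ^ i
  have hdeg : P.natDegree ≤ q ^ (m - 1) :=
    natDegree_sum_le_of_forall_le _ _ fun i hi => by
      rw [natDegree_X_pow]
      exact Nat.pow_le_pow_right (by omega) (by simp at hi; omega)
  have hP : P = 0 :=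
    eq_zero_of_natDegree_lt_card_of_eval_eq_zero P Function.injective_id
      (by simpa [P, powTrace, eval_finsetSum] using h) (hdeg.trans_lt hlt)
  have hcoeff : P.coeff 1 = 1 := by
    rw [finsetSum_coeff, sum_eq_single_of_mem 0 (by simpa using Nat.pos_of_ne_zero hm)]
    · simp
    · intro i _ hi
      rw [coeff_X_pow, if_neg (Nat.one_lt_pow hi (by omega)).ne]
  simp [hP] at hcoeff

theorem eq_zero_of_forall_powTrace_mul_eq_zero {L : Type*} [Field L] {q m : ℕ}
    (htr : ∃ z : L, powTrace q m z ≠ 0) {c : L} (h : ∀ x, powTrace q m (c * x) = 0) :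
    c = 0 := by
  obtain ⟨z, hz⟩ := htr
  by_contra hc
  exact hz (by simpa [mul_div_cancel₀ _ hc] using h (z / c))

theorem Subfield.pow_natCard_of_mem {L : Type*} [Field L] {K : Subfield L} [Finite K] {a : L}
    (ha : a ∈ K) : a ^ Nat.card K = a := by
  have := Fintype.ofFinite K
  simpa [Nat.card_eq_fintype_card] using
    congrArg Subtype.val (FiniteField.pow_card (⟨a, ha⟩ : K))

theorem stmt2_general (q n : ℕ) (hq : IsPrimePow q) (hn : 2 ≤ n)
    (L : Type*) [Field L] [Finite L]
    (K : Subfield L) (hKcard : Nat.card K = q ^ n)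
    (hLcard : Nat.card L = q ^ (2 * n))
    (a : L) (haK : a ∈ K) (ha : a ≠ 0) :
    (∀ x y : L,
      ∑ i ∈ Finset.range n,
          (a * ((x + y) ^ (q ^ n + 1) - x ^ (q ^ n + 1) - y ^ (q ^ n + 1))) ^ q ^ i
        = ∑ i ∈ Finset.range (2 * n), (a * x * y ^ q ^ n) ^ q ^ i) ∧
    (∀ y : L,
      (∀ x : L, ∑ i ∈ Finset.range (2 * n), (a * x * y ^ q ^ n) ^ q ^ i = 0) → y = 0) := by
  cases nonempty_fintype L
  obtain ⟨p, k, hp, hk, rfl⟩ := hq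
  have := Fact.mk hp.nat_prime
  have hLcard' : Fintype.card L = (p ^ k) ^ (2 * n) := by rw [← Nat.card_eq_fintype_card, hLcard]
  have : CharP L p := charP_of_card_eq_prime_pow (f := k * (2 * n)) (by rw [hLcard', ← pow_mul])
  have haQ : a ^ (p ^ k) ^ n = a := hKcard ▸ Subfield.pow_natCard_of_mem haK
  have hfix (y : L) : (y ^ (p ^ k) ^ n) ^ (p ^ k) ^ n = y := by
    rw [← pow_mul, ← pow_add, ← two_mul, ← hLcard', FiniteField.pow_card]
  refine ⟨fun x y => ?_, fun y hy => ?_⟩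
  · have hu : a * ((x + y) ^ ((p ^ k) ^ n + 1) - x ^ ((p ^ k) ^ n + 1) - y ^ ((p ^ k) ^ n + 1)) =
        a * x * y ^ (p ^ k) ^ n + (a * x * y ^ (p ^ k) ^ n) ^ (p ^ k) ^ n := by
      rw [add_pow_succ_sub_pow_succ_sub_pow_succ (add_pow_pow_pow p k n x y), mul_pow, mul_pow,
        haQ, hfix]
      ring
    change powTrace _ n _ = powTrace _ (2 * n) _
    rw [hu, powTrace_add p, powTrace_two_mul]
  · have hq : 2 ≤ p ^ k := hp.nat_prime.two_le.trans (Nat.le_self_pow hk.ne' p)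
    have htr := exists_powTrace_ne_zero (L := L) (m := 2 * n) hq (by omega) <| by
      rw [hLcard']
      exact Nat.pow_lt_pow_right hq (by omega)
    have hc := eq_zero_of_forall_powTrace_mul_eq_zero htr (c := a * y ^ (p ^ k) ^ n) fun x => by
      rw [mul_right_comm]
      exact hy x
    exact pow_eq_zero_iff (by positivity) |>.mp ((mul_eq_zero.mp hc).resolve_left ha)

/-- For nonzero `a ∈ K`: (i) the polar form of `x ↦ Tr_{K/F}(a * x^(q^n+1))` is
`B(x,y) = Tr_{L/F}(a * x * y^(q^n))`; (ii) `B` is nondegenerate.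
Here `Tr_{K/F}(z) = ∑ i < n, z^(q^i)` and `Tr_{L/F}(z) = ∑ i < 2n, z^(q^i)`. -/
theorem stmt2 (q n : ℕ) (hq : IsPrimePow q) (hn : 2 ≤ n)
    (L : Type*) [Field L] [Finite L]
    (F K : Subfield L) (hFK : F ≤ K)
    (hFcard : Nat.card F = q) (hKcard : Nat.card K = q ^ n)
    (hLcard : Nat.card L = q ^ (2 * n))
    (a : L) (haK : a ∈ K) (ha : a ≠ 0) :
    (∀ x y : L,
      ∑ i ∈ Finset.range n,
          (a * ((x + y) ^ (q ^ n + 1) - x ^ (q ^ n + 1) - y ^ (q ^ n + 1))) ^ q ^ i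
        = ∑ i ∈ Finset.range (2 * n), (a * x * y ^ q ^ n) ^ q ^ i) ∧
    (∀ y : L,
      (∀ x : L, ∑ i ∈ Finset.range (2 * n), (a * x * y ^ q ^ n) ^ q ^ i = 0) → y = 0) :=
  stmt2_general q n hq hn L K hKcard hLcard a haK ha
end

section
/- For nonzero elements a, b ∈ K, the zero sets coincide, i.e. {x ∈ L : Tr_{K/F}(a·x^{q^n+1}) = 0} = {x ∈ L : Tr_{K/F}(b·x^{q^n+1}) = 0}, if and only if there exists c ∈ F with a = c·b. (Thus Q_a = Q_b if and only if a/b ∈ F, so one obtains exactly (q^n−1)/(q−1) distinct quadrics Q_a.) -/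
/-!
Since `K/F` is separable, the trace form is nondegenerate, so `a ↦ (y ↦ Tr(a y))` identifies
`K` with its `F`-dual; two nonzero functionals have the same kernel iff they are proportional,
hence the zero sets of `y ↦ Tr(a y)` and `y ↦ Tr(b y)` on `K` agree iff `a ∈ F b`. The passage
from `K` to `L` is through `x ↦ x ^ (q ^ n + 1)`, which is the norm `L → K` and hence surjective.
-/

open LinearMap

theorem LinearMap.exists_eq_smul_of_ker_le {𝕜 E : Type*} [Field 𝕜] [AddCommGroup E]
    [Module 𝕜 E] {f g : E →ₗ[𝕜] 𝕜} (h : ker g ≤ ker f) : ∃ c : 𝕜, f = c • g := by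
  have hspan := mem_span_of_iInf_ker_le_ker (L := fun _ : Unit ↦ g) (K := f) (by simpa using h)
  simpa [Set.range_const, Submodule.mem_span_singleton, eq_comm] using hspan

theorem Algebra.ker_traceForm_eq_iff_exists_eq_smul {F K : Type*} [Field F] [Field K]
    [Algebra F K] [FiniteDimensional F K] [Algebra.IsSeparable F K] {a b : K} (ha : a ≠ 0) :
    ker (traceForm F K a) = ker (traceForm F K b) ↔ ∃ c : F, a = c • b := by
  constructor
  · intro hker
    obtain ⟨c, hc⟩ := exists_eq_smul_of_ker_le hker.ge
    rw [← map_smul] at hc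
    exact ⟨c, ker_eq_bot.mp (traceForm_nondegenerate F K).ker_eq_bot hc⟩
  · rintro ⟨c, rfl⟩
    rw [map_smul, ker_smul _ _ (left_ne_zero_of_smul ha)]

namespace FiniteField

variable {F K : Type*} [Field F] [Field K] [Algebra F K] [Finite K]

theorem algebraMap_trace_eq_sum_pow_of_card_eq {n : ℕ} (hcard : Nat.card K = Nat.card F ^ n)
    (x : K) :
    algebraMap F K (Algebra.trace F K x) = ∑ i ∈ Finset.range n, x ^ Nat.card F ^ i := by
  have := Finite.of_injective _ (algebraMap F K).injective
  have hfinrank : Module.finrank F K = n :=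
    Nat.pow_right_injective (Finite.one_lt_card (α := F))
      (Module.natCard_eq_pow_finrank.symm.trans hcard)
  rw [algebraMap_trace_eq_sum_pow, hfinrank]

theorem algebraMap_norm_eq_pow_of_card_eq_sq (hcard : Nat.card K = Nat.card F ^ 2) (x : K) :
    algebraMap F K (Algebra.norm F x) = x ^ (Nat.card F + 1) := by
  have := Finite.of_injective _ (algebraMap F K).injective
  have hF : 1 < Nat.card F := Finite.one_lt_card
  have hfactor : Nat.card F ^ 2 - 1 = (Nat.card F + 1) * (Nat.card F - 1) := by
    simpa using Nat.sq_sub_sq (Nat.card F) 1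
  rw [algebraMap_norm_eq_pow, hcard, hfactor, Nat.mul_div_cancel _ (by omega)]

end FiniteField

theorem stmt3_general (q n : ℕ)
    (L : Type*) [Field L] [Finite L]
    (F K : Subfield L) (hFK : F ≤ K)
    (hFcard : Nat.card F = q) (hKcard : Nat.card K = q ^ n)
    (hLcard : Nat.card L = q ^ (2 * n))
    (a b : L) (haK : a ∈ K) (hbK : b ∈ K) (ha : a ≠ 0) :
    {x : L | ∑ i ∈ Finset.range n, (a * x ^ (q ^ n + 1)) ^ q ^ i = 0}
      = {x : L | ∑ i ∈ Finset.range n, (b * x ^ (q ^ n + 1)) ^ q ^ i = 0}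
    ↔ ∃ c ∈ F, a = c * b := by
  let : Algebra F K := (Subfield.inclusion hFK).toAlgebra
  have htrace (z : K) : ∑ i ∈ Finset.range n, (z : L) ^ q ^ i = (Algebra.trace F K z : L) := by
    have := congrArg ((↑) : K → L)
      (FiniteField.algebraMap_trace_eq_sum_pow_of_card_eq (F := F) (by rw [hKcard, hFcard]) z)
    push_cast [hFcard] at this
    exact this.symm
  have hnorm (x : L) : x ^ (q ^ n + 1) = (Algebra.norm K x : L) := by
    have := FiniteField.algebraMap_norm_eq_pow_of_card_eq_sq (F := K)
      (by rw [hLcard, hKcard, ← pow_mul, mul_comm]) x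
    rw [hKcard] at this
    exact this.symm
  have hzero (c : L) (hc : c ∈ K) :
      {x : L | ∑ i ∈ Finset.range n, (c * x ^ (q ^ n + 1)) ^ q ^ i = 0}
        = Algebra.norm K ⁻¹' ker (Algebra.traceForm F K ⟨c, hc⟩) := by
    ext x
    have := htrace (⟨c, hc⟩ * Algebra.norm K x)
    push_cast at this
    simp [hnorm, this]
  rw [hzero a haK, hzero b hbK,
    (Set.preimage_injective.mpr (FiniteField.norm_surjective K L)).eq_iff, SetLike.coe_set_eq,
    Algebra.ker_traceForm_eq_iff_exists_eq_smul fun h ↦ ha (congrArg Subtype.val h)]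
  constructor
  · rintro ⟨c, hc⟩
    exact ⟨c, c.2, congrArg Subtype.val hc⟩
  · rintro ⟨c, hcF, h⟩
    exact ⟨⟨c, hcF⟩, Subtype.ext h⟩

/-- For nonzero `a, b ∈ K`, the zero sets of `x ↦ Tr_{K/F}(a * x^(q^n+1))` and
`x ↦ Tr_{K/F}(b * x^(q^n+1))` coincide if and only if `a = c * b` for some `c ∈ F`.
Here `Tr_{K/F}(z) = ∑ i < n, z^(q^i)` for `z ∈ K`. -/
theorem stmt3 (q n : ℕ) (hq : IsPrimePow q) (hn : 2 ≤ n)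
    (L : Type*) [Field L] [Finite L]
    (F K : Subfield L) (hFK : F ≤ K)
    (hFcard : Nat.card F = q) (hKcard : Nat.card K = q ^ n)
    (hLcard : Nat.card L = q ^ (2 * n))
    (a b : L) (haK : a ∈ K) (hbK : b ∈ K) (ha : a ≠ 0) (hb : b ≠ 0) :
    {x : L | ∑ i ∈ Finset.range n, (a * x ^ (q ^ n + 1)) ^ q ^ i = 0}
      = {x : L | ∑ i ∈ Finset.range n, (b * x ^ (q ^ n + 1)) ^ q ^ i = 0}
    ↔ ∃ c ∈ F, a = c * b :=
  stmt3_general q n L F K hFK hFcard hKcard hLcard a b haK hbK ha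
end

section
/- For nonzero elements x, y ∈ L, the following are equivalent: (i) there exist j ∈ ℕ and c ∈ F with c ≠ 0 such that y = c·ξ^j·x; (ii) there exists d ∈ F with y^{q^n+1} = d·x^{q^n+1}. (Thus the ⟨ξ⟩-orbit through x is exactly the set of points whose norms are F-proportional to the norm of x; in particular each orbit is the intersection of the n−1 linearly independent quadrics Q_a containing one of its points.) -/
/-!
The exponent `(q^n - 1)/(q - 1)` is chosen so that `ξ` is a primitive root of unity of order
`(q^n + 1)(q - 1)`, while `F^×` is exactly the group of `(q - 1)`-th roots of unity in `L`.
Hence `ξ^(q^n+1) ∈ F`, which gives the forward direction. Conversely, if the norms are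
`F`-proportional then `(y/x)^(q^n+1) ∈ F^×`, so `y/x` is a root of unity of order dividing
`(q^n + 1)(q - 1)` and therefore a power of `ξ`.
-/

theorem Nat.pow_sub_one_div_mul_pow_add_one_mul (q n : ℕ) :
    (q ^ n - 1) / (q - 1) * ((q ^ n + 1) * (q - 1)) = q ^ (2 * n) - 1 := by
  have hdvd : q - 1 ∣ q ^ n - 1 := by simpa using Nat.sub_dvd_pow_sub_pow q 1 n
  rw [mul_comm (q ^ n + 1), ← mul_assoc, Nat.div_mul_cancel hdvd, mul_comm 2 n, pow_mul,
    ← one_pow 2, Nat.sq_sub_sq, one_pow, mul_comm]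

theorem Subfield.mem_of_pow_card_sub_one_eq_one {L : Type*} [Field L] (F : Subfield L) [Finite F]
    {z : L} (hz : z ^ (Nat.card F - 1) = 1) : z ∈ F := by
  obtain ⟨g, hg⟩ := IsCyclic.exists_ofOrder_eq_natCard (α := Fˣ)
  have : NeZero (Nat.card F - 1) := ⟨by have := Finite.one_lt_card (α := F); omega⟩
  have hprim : IsPrimitiveRoot ((g : F) : L) (Nat.card F - 1) := by
    rw [← Nat.card_units, ← hg]
    exact (IsPrimitiveRoot.coe_units_iff.mpr (IsPrimitiveRoot.orderOf g)).map_of_injective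
      F.subtype_injective
  obtain ⟨i, -, rfl⟩ := hprim.eq_pow_of_pow_eq_one hz
  exact pow_mem (g : F).2 i

theorem Subfield.pow_card_sub_one_eq_one {L : Type*} [Field L] (F : Subfield L) [Finite F]
    {z : L} (hz : z ∈ F) (hz0 : z ≠ 0) : z ^ (Nat.card F - 1) = 1 := by
  have := Fintype.ofFinite F
  rw [Nat.card_eq_fintype_card]
  exact congrArg Subtype.val
    (FiniteField.pow_card_sub_one_eq_one (⟨z, hz⟩ : F) (Subtype.coe_ne_coe.mp hz0))

theorem IsPrimitiveRoot.exists_eq_mul_pow_mul_iff_exists_pow_eq_mul {L : Type*} [Field L]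
    (F : Subfield L) [Finite F] {N : ℕ} (hN : 0 < N) {ξ : L}
    (hξ : IsPrimitiveRoot ξ (N * (Nat.card F - 1))) {x y : L} (hy : y ≠ 0) :
    (∃ j : ℕ, ∃ c ∈ F, c ≠ 0 ∧ y = c * ξ ^ j * x) ↔ ∃ d ∈ F, y ^ N = d * x ^ N := by
  constructor
  · rintro ⟨j, c, hc, -, rfl⟩
    have hξN : ξ ^ N ∈ F :=
      F.mem_of_pow_card_sub_one_eq_one (by rw [← pow_mul, hξ.pow_eq_one])
    refine ⟨c ^ N * (ξ ^ N) ^ j, mul_mem (pow_mem hc N) (pow_mem hξN j), ?_⟩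
    ring
  · rintro ⟨d, hd, hyx⟩
    obtain ⟨hd0, hxN⟩ := mul_ne_zero_iff.mp (hyx ▸ pow_ne_zero N hy)
    have hx : x ≠ 0 := ne_zero_pow hN.ne' hxN
    have : NeZero (N * (Nat.card F - 1)) :=
      ⟨by have := Finite.one_lt_card (α := F); exact (Nat.mul_pos hN (by omega)).ne'⟩
    obtain ⟨j, -, hj⟩ := hξ.eq_pow_of_pow_eq_one (ξ := y / x)
      (by rw [pow_mul, div_pow, hyx, mul_div_cancel_right₀ d hxN,
        F.pow_card_sub_one_eq_one hd hd0])
    exact ⟨j, 1, one_mem F, one_ne_zero, by rw [one_mul, hj, div_mul_cancel₀ y hx]⟩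

theorem stmt7_general (q n : ℕ) (hn : 2 ≤ n)
    (L : Type*) [Field L] [Finite L]
    (F : Subfield L)
    (hFcard : Nat.card F = q)
    (β : L) (hβ : orderOf β = q ^ (2 * n) - 1)
    (ξ : L) (hξ : ξ = β ^ ((q ^ n - 1) / (q - 1)))
    (x y : L) (hy : y ≠ 0) :
    (∃ j : ℕ, ∃ c ∈ F, c ≠ 0 ∧ y = c * ξ ^ j * x) ↔
    (∃ d ∈ F, y ^ (q ^ n + 1) = d * x ^ (q ^ n + 1)) := by
  subst hFcard hξ
  have hq : 1 < Nat.card F := Finite.one_lt_card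
  have hβpos : 0 < orderOf β := by
    rw [hβ, Nat.sub_pos_iff_lt]
    exact Nat.one_lt_pow (by omega) hq
  refine IsPrimitiveRoot.exists_eq_mul_pow_mul_iff_exists_pow_eq_mul F (by positivity) ?_ hy
  exact (IsPrimitiveRoot.orderOf β).pow hβpos
    (by rw [hβ, Nat.pow_sub_one_div_mul_pow_add_one_mul])

/-- For nonzero `x, y ∈ L`: `y` lies in the `F`-scalar-closed `⟨ξ⟩`-orbit of `x`
(i.e. `y = c * ξ^j * x` for some `j` and nonzero `c ∈ F`) if and only if
`y^(q^n+1) = d * x^(q^n+1)` for some `d ∈ F`. -/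
theorem stmt7 (q n : ℕ) (hq : IsPrimePow q) (hn : 2 ≤ n)
    (L : Type*) [Field L] [Finite L]
    (F K : Subfield L) (hFK : F ≤ K)
    (hFcard : Nat.card F = q) (hKcard : Nat.card K = q ^ n)
    (hLcard : Nat.card L = q ^ (2 * n))
    (β : L) (hβ : orderOf β = q ^ (2 * n) - 1)
    (ξ : L) (hξ : ξ = β ^ ((q ^ n - 1) / (q - 1)))
    (x y : L) (hx : x ≠ 0) (hy : y ≠ 0) :
    (∃ j : ℕ, ∃ c ∈ F, c ≠ 0 ∧ y = c * ξ ^ j * x) ↔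
    (∃ d ∈ F, y ^ (q ^ n + 1) = d * x ^ (q ^ n + 1)) :=
  stmt7_general q n hn L F hFcard β hβ ξ hξ x y hy
end

section
/- Suppose n ≥ 3 is odd, and let E be the unique subfield of L with |E| = q² (it exists since 2 divides 2n). Then every nonzero element of E is a power of ξ, i.e. E^× is contained in the cyclic subgroup of L^× generated by ξ. (Consequently each ⟨ξ⟩-orbit on the points of PG(2n−1,q) is closed under the F_{q²}-line structure, i.e. is a union of (q^n+1)/(q+1) pairwise disjoint lines.) -/
/-!
`Eˣ` is the unique subgroup of order `q² - 1` of the cyclic group `Lˣ = ⟨β⟩`,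
namely `⟨β ^ c⟩` with `c = (q^{2n} - 1) / (q² - 1)`. For odd `n`, `q + 1` divides `q^n + 1`, so
`c = (q^n - 1)/(q - 1) · (q^n + 1)/(q + 1)` is a multiple of the exponent defining `ξ`,
and `β ^ c` is a power of `ξ`.
-/

theorem Nat.sub_one_div_mul_add_one_div_mul_sq_sub_one {q n : ℕ} (hn : Odd n) :
    (q ^ n - 1) / (q - 1) * ((q ^ n + 1) / (q + 1)) * (q ^ 2 - 1) = q ^ (2 * n) - 1 := by
  have hminus : (q ^ n - 1) / (q - 1) * (q - 1) = q ^ n - 1 :=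
    Nat.div_mul_cancel (by simpa using Nat.sub_dvd_pow_sub_pow q 1 n)
  have hplus : (q ^ n + 1) / (q + 1) * (q + 1) = q ^ n + 1 :=
    Nat.div_mul_cancel (by simpa using hn.nat_add_dvd_pow_add_pow q 1)
  have hsq : q ^ 2 - 1 = (q + 1) * (q - 1) := by simpa using Nat.sq_sub_sq q 1
  have hsq' : q ^ (2 * n) - 1 = (q ^ n + 1) * (q ^ n - 1) := by
    simpa [← pow_mul, mul_comm] using Nat.sq_sub_sq (q ^ n) 1
  calc _ = (q ^ n - 1) / (q - 1) * (q - 1) * ((q ^ n + 1) / (q + 1) * (q + 1)) := by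
        rw [hsq]; ring
    _ = q ^ (2 * n) - 1 := by rw [hminus, hplus, hsq', mul_comm]

theorem IsPrimitiveRoot.exists_pow_pow_eq_of_pow_eq_one {R : Type*} [CommRing R] [IsDomain R]
    {β x : R} {c m : ℕ} (hβ : IsPrimitiveRoot β (c * m)) (hcm : c * m ≠ 0) (hx : x ^ m = 1) :
    ∃ i, (β ^ c) ^ i = x := by
  have hc : c ≠ 0 := left_ne_zero_of_mul hcm
  have : NeZero m := ⟨right_ne_zero_of_mul hcm⟩
  have hprim : IsPrimitiveRoot (β ^ c) m := by
    simpa [Nat.mul_div_cancel_left m (Nat.pos_of_ne_zero hc)] using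
      hβ.pow_of_dvd hc (dvd_mul_right c m)
  obtain ⟨i, -, hi⟩ := hprim.eq_pow_of_pow_eq_one hx
  exact ⟨i, hi⟩

theorem Subfield.pow_natCard_sub_one_eq_one {L : Type*} [Field L] (E : Subfield L) [Finite E]
    {e : L} (he : e ∈ E) (he0 : e ≠ 0) : e ^ (Nat.card E - 1) = 1 := by
  have : Fintype E := Fintype.ofFinite E
  have h := FiniteField.pow_card_sub_one_eq_one (⟨e, he⟩ : E)
    (by simpa [Subtype.ext_iff] using he0)
  rw [← Nat.card_eq_fintype_card] at h
  simpa using congrArg Subtype.val h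

theorem stmt10_general (q n : ℕ) (hnodd : Odd n)
    (L : Type*) [Field L] [Finite L]
    (hLcard : Nat.card L = q ^ (2 * n))
    (β : L) (hβ : orderOf β = q ^ (2 * n) - 1)
    (ξ : L) (hξ : ξ = β ^ ((q ^ n - 1) / (q - 1)))
    (E : Subfield L) (hEcard : Nat.card E = q ^ 2) :
    ∀ e ∈ E, e ≠ 0 → ∃ j : ℕ, e = ξ ^ j := by
  intro e he he0
  have hcard := Nat.sub_one_div_mul_add_one_div_mul_sq_sub_one (q := q) hnodd
  have hβprim : IsPrimitiveRoot β _ := hcard ▸ hβ ▸ IsPrimitiveRoot.orderOf β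
  have hne : q ^ (2 * n) - 1 ≠ 0 := by
    have := Finite.one_lt_card (α := L)
    omega
  have he1 : e ^ (q ^ 2 - 1) = 1 := hEcard ▸ E.pow_natCard_sub_one_eq_one he he0
  obtain ⟨i, hi⟩ := hβprim.exists_pow_pow_eq_of_pow_eq_one (hcard ▸ hne) he1
  exact ⟨(q ^ n + 1) / (q + 1) * i, by rw [← hi, hξ, ← pow_mul, ← pow_mul, mul_assoc]⟩

/-- Suppose `n ≥ 3` is odd and `E` is the subfield of `L` with `q^2` elements.
Then every nonzero element of `E` is a power of `ξ`, i.e. `Eˣ ⊆ ⟨ξ⟩`. -/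
theorem stmt10 (q n : ℕ) (hq : IsPrimePow q) (hn : 3 ≤ n) (hnodd : Odd n)
    (L : Type*) [Field L] [Finite L]
    (F K : Subfield L) (hFK : F ≤ K)
    (hFcard : Nat.card F = q) (hKcard : Nat.card K = q ^ n)
    (hLcard : Nat.card L = q ^ (2 * n))
    (β : L) (hβ : orderOf β = q ^ (2 * n) - 1)
    (ξ : L) (hξ : ξ = β ^ ((q ^ n - 1) / (q - 1)))
    (E : Subfield L) (hEcard : Nat.card E = q ^ 2) :
    ∀ e ∈ E, e ≠ 0 → ∃ j : ℕ, e = ξ ^ j :=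
  stmt10_general q n hnodd L hLcard β hβ ξ hξ E hEcard
end

section
/- For all a ∈ K and all natural numbers i, j: Tr_{K/F}(a·(β^{i + j·(q^n−1)/(q−1)})^{q^n+1}) = β^{j·(q^{2n}−1)/(q−1)} · Tr_{K/F}(a·γ^i), where γ := β^{q^n+1} ∈ K, and moreover the factor β^{j·(q^{2n}−1)/(q−1)} lies in F. In particular, if Tr_{K/F}(a·γ^i) = 0 then Tr_{K/F}(a·(β^{i + j·(q^n−1)/(q−1)})^{q^n+1}) = 0 for every j. (This is the key computation showing that the map γ^i ↦ I_i is an anti-automorphism between Π and the space of quadrics Γ.) -/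
/-!
Since `(q^n - 1)/(q - 1) · (q^n + 1) = (q^(2n) - 1)/(q - 1)`, raising `β^(i + j(q^n-1)/(q-1))`
to the power `q^n + 1` gives `γ^i · c` with `c = β^(j(q^(2n)-1)/(q-1))`.
Because `c^(q-1)` is a power of `β^(q^(2n)-1) = 1`, `c` is a root of `X^q - X`, whose roots in `L`
are exactly the `q` elements of `F`. So `c ∈ F`, every Frobenius power `x ↦ x^(q^t)` fixes `c`,
and `c` factors out of the trace.
-/

theorem Nat.pow_sub_one_div_mul_pow_add_one (q n : ℕ) :
    (q ^ n - 1) / (q - 1) * (q ^ n + 1) = (q ^ (2 * n) - 1) / (q - 1) := by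
  rw [Nat.div_mul_right_comm (Nat.sub_one_dvd_pow_sub_one q n), mul_comm 2, pow_mul, sq,
    ← one_mul 1, Nat.mul_self_sub_mul_self_eq, mul_comm, one_mul]

theorem pow_pow_eq_self_of_pow_eq_self {M : Type*} [Monoid M] {c : M} {q : ℕ} (hc : c ^ q = c)
    (t : ℕ) : c ^ q ^ t = c := by
  induction t with
  | zero => simp
  | succ t ih => rw [pow_succ, pow_mul, ih, hc]

theorem FiniteField.pow_div_sub_one_pow_eq_self {L : Type*} [Field L] [Finite L] {q : ℕ}
    (hq : 0 < q) (hdvd : q - 1 ∣ Nat.card L - 1) (x : L) :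
    (x ^ ((Nat.card L - 1) / (q - 1))) ^ q = x ^ ((Nat.card L - 1) / (q - 1)) := by
  have := Fintype.ofFinite L
  set E := (Nat.card L - 1) / (q - 1)
  rcases eq_or_ne x 0 with rfl | hx
  · rcases eq_or_ne E 0 with hE | hE
    · simp [hE]
    · simp [zero_pow hE, hq.ne']
  · have hpow : x ^ (E * (q - 1)) = 1 := by
      rw [Nat.div_mul_cancel hdvd, Nat.card_eq_fintype_card,
        FiniteField.pow_card_sub_one_eq_one x hx]
    calc (x ^ E) ^ q = x ^ (E * (q - 1)) * x ^ E := by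
          rw [← pow_mul, ← pow_add, ← mul_add_one, Nat.sub_one_add_one hq.ne']
      _ = x ^ E := by rw [hpow, one_mul]

open Polynomial in
theorem Subfield.mem_of_pow_card_eq_self {L : Type*} [Field L] (F : Subfield L) [Finite F]
    {x : L} (hx : x ^ Nat.card F = x) : x ∈ F := by
  have := Fintype.ofFinite F
  have hsplits : (X ^ Fintype.card F - X : F[X]).Splits := by
    rw [splits_iff_card_roots, FiniteField.roots_X_pow_card_sub_X, ← Finset.card_def,
      Finset.card_univ, FiniteField.X_pow_card_sub_X_natDegree_eq _ Fintype.one_lt_card]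
  rw [Nat.card_eq_fintype_card] at hx
  have hroot : x ∈ (Polynomial.map F.subtype (X ^ Fintype.card F - X)).roots := by
    simp [FiniteField.X_pow_card_sub_X_ne_zero L Fintype.one_lt_card, hx]
  rw [hsplits.roots_map, FiniteField.roots_X_pow_card_sub_X] at hroot
  obtain ⟨y, -, rfl⟩ := Multiset.mem_map.mp hroot
  exact y.2

theorem stmt11_general (q n : ℕ)
    (L : Type*) [Field L] [Finite L]
    (F K : Subfield L)
    (hFcard : Nat.card F = q)
    (hLcard : Nat.card L = q ^ (2 * n))
    (β : L)
    (γ : L) (hγ : γ = β ^ (q ^ n + 1)) :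
    ∀ a ∈ K, ∀ i j : ℕ,
      (∑ t ∈ Finset.range n,
          (a * (β ^ (i + j * ((q ^ n - 1) / (q - 1)))) ^ (q ^ n + 1)) ^ q ^ t
        = β ^ (j * ((q ^ (2 * n) - 1) / (q - 1)))
            * ∑ t ∈ Finset.range n, (a * γ ^ i) ^ q ^ t) ∧
      β ^ (j * ((q ^ (2 * n) - 1) / (q - 1))) ∈ F ∧
      ((∑ t ∈ Finset.range n, (a * γ ^ i) ^ q ^ t = 0) →
        ∑ t ∈ Finset.range n,
          (a * (β ^ (i + j * ((q ^ n - 1) / (q - 1)))) ^ (q ^ n + 1)) ^ q ^ t = 0) := by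
  intro a _ i j
  have hq : 0 < q := hFcard ▸ Nat.card_pos
  have hβ := FiniteField.pow_div_sub_one_pow_eq_self hq
    (hLcard ▸ Nat.sub_one_dvd_pow_sub_one q (2 * n)) β
  rw [hLcard] at hβ
  set c := β ^ (j * ((q ^ (2 * n) - 1) / (q - 1)))
  have hc : c ^ q = c := by rw [show c = _ from pow_mul' β j _, pow_right_comm, hβ]
  have hpow : (β ^ (i + j * ((q ^ n - 1) / (q - 1)))) ^ (q ^ n + 1) = γ ^ i * c := by
    rw [hγ, ← pow_mul, ← pow_mul, ← pow_add, add_mul, mul_assoc,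
      Nat.pow_sub_one_div_mul_pow_add_one, mul_comm i]
  have htrace :
      ∑ t ∈ Finset.range n, (a * (β ^ (i + j * ((q ^ n - 1) / (q - 1)))) ^ (q ^ n + 1)) ^ q ^ t
        = c * ∑ t ∈ Finset.range n, (a * γ ^ i) ^ q ^ t := by
    simp_rw [Finset.mul_sum, hpow, ← mul_assoc, mul_pow, pow_pow_eq_self_of_pow_eq_self hc,
      mul_comm c]
  refine ⟨htrace, F.mem_of_pow_card_eq_self (hFcard ▸ hc), fun h => ?_⟩
  rw [htrace, h, mul_zero]

/-- The key computation showing `γ^i ↦ I_i` is an anti-automorphism: for `a ∈ K` and `i, j`,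
`Tr_{K/F}(a * (β^(i + j(q^n-1)/(q-1)))^(q^n+1)) = β^(j(q^(2n)-1)/(q-1)) * Tr_{K/F}(a * γ^i)`,
the factor `β^(j(q^(2n)-1)/(q-1))` lies in `F`, and in particular `Tr_{K/F}(a * γ^i) = 0`
implies the left-hand side vanishes for all `j`. Here `γ = β^(q^n+1)` and
`Tr_{K/F}(z) = ∑ t < n, z^(q^t)` for `z ∈ K`. -/
theorem stmt11 (q n : ℕ) (hq : IsPrimePow q) (hn : 2 ≤ n)
    (L : Type*) [Field L] [Finite L]
    (F K : Subfield L) (hFK : F ≤ K)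
    (hFcard : Nat.card F = q) (hKcard : Nat.card K = q ^ n)
    (hLcard : Nat.card L = q ^ (2 * n))
    (β : L) (hβ : orderOf β = q ^ (2 * n) - 1)
    (γ : L) (hγ : γ = β ^ (q ^ n + 1)) :
    ∀ a ∈ K, ∀ i j : ℕ,
      (∑ t ∈ Finset.range n,
          (a * (β ^ (i + j * ((q ^ n - 1) / (q - 1)))) ^ (q ^ n + 1)) ^ q ^ t
        = β ^ (j * ((q ^ (2 * n) - 1) / (q - 1)))
            * ∑ t ∈ Finset.range n, (a * γ ^ i) ^ q ^ t) ∧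
      β ^ (j * ((q ^ (2 * n) - 1) / (q - 1))) ∈ F ∧
      ((∑ t ∈ Finset.range n, (a * γ ^ i) ^ q ^ t = 0) →
        ∑ t ∈ Finset.range n,
          (a * (β ^ (i + j * ((q ^ n - 1) / (q - 1)))) ^ (q ^ n + 1)) ^ q ^ t = 0) :=
  stmt11_general q n L F K hFcard hLcard β γ hγ
end

section
/- Let γ := β^{q^n+1} ∈ K. If k is a natural number such that β^k ∈ F and γ^k = β^k (i.e. the pair (β^k, γ^k) is an F-scalar multiple of (1,1)), then q^{2n} − 1 divides k. (Consequently the cyclic group generated by the map (x,y) ↦ (βx, γy) acts sharply transitively on the q^{2n} − 1 projective points of C ∖ Π, the orbit of the point (1,1).) -/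
/-!
Since `γ = β ^ (q ^ n + 1)`, the relation `γ ^ k = β ^ k` says `β ^ (k q ^ n) = 1`, so the order
`q ^ (2n) - 1` of `β` divides `k q ^ n`; it is coprime to `q ^ n`, which divides `q ^ (2n)`.
-/

theorem Nat.coprime_sub_one_of_dvd {a b : ℕ} (hb : 1 ≤ b) (hab : a ∣ b) : (b - 1).Coprime a :=
  ((Nat.coprime_self_sub_left hb).2 (Nat.coprime_one_left b)).coprime_dvd_right hab

theorem orderOf_dvd_mul_of_pow_pow_succ_eq {M₀ : Type*} [MonoidWithZero M₀] [IsCancelMulZero M₀]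
    {β : M₀} (hβ : β ≠ 0) {m k : ℕ} (h : (β ^ (m + 1)) ^ k = β ^ k) : orderOf β ∣ k * m := by
  refine orderOf_dvd_of_pow_eq_one ((mul_eq_right₀ (pow_ne_zero k hβ)).1 ?_)
  rw [← pow_add, ← h, ← pow_mul, add_one_mul, mul_comm]

theorem stmt15_general (q n : ℕ)
    (L : Type*) [Field L] [Finite L]
    (F : Subfield L)
    (hLcard : Nat.card L = q ^ (2 * n))
    (β : L) (hβ : orderOf β = q ^ (2 * n) - 1)
    (γ : L) (hγ : γ = β ^ (q ^ n + 1)) :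
    ∀ k : ℕ, β ^ k ∈ F → γ ^ k = β ^ k → (q ^ (2 * n) - 1) ∣ k := by
  intro k _ hk
  have hcard : 1 < q ^ (2 * n) := hLcard ▸ Finite.one_lt_card
  have hβ0 : β ≠ 0 := by
    rintro rfl
    rw [orderOf_zero] at hβ
    omega
  have hdvd : q ^ (2 * n) - 1 ∣ k * q ^ n :=
    hβ ▸ orderOf_dvd_mul_of_pow_pow_succ_eq hβ0 (hγ ▸ hk)
  have hcop : (q ^ (2 * n) - 1).Coprime (q ^ n) :=
    Nat.coprime_sub_one_of_dvd hcard.le (pow_dvd_pow q (by omega))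
  exact hcop.dvd_of_dvd_mul_right hdvd

/-- If `β^k ∈ F` and `γ^k = β^k` (i.e. `(β^k, γ^k)` is an `F`-scalar multiple of `(1,1)`),
then `q^(2n) - 1 ∣ k`; hence the cyclic group generated by `(x,y) ↦ (βx, γy)` acts sharply
transitively on the `q^(2n) - 1` projective points of `C \ Π`. Here `γ = β^(q^n+1)`. -/
theorem stmt15 (q n : ℕ) (hq : IsPrimePow q) (hn : 2 ≤ n)
    (L : Type*) [Field L] [Finite L]
    (F K : Subfield L) (hFK : F ≤ K)
    (hFcard : Nat.card F = q) (hKcard : Nat.card K = q ^ n)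
    (hLcard : Nat.card L = q ^ (2 * n))
    (β : L) (hβ : orderOf β = q ^ (2 * n) - 1)
    (γ : L) (hγ : γ = β ^ (q ^ n + 1)) :
    ∀ k : ℕ, β ^ k ∈ F → γ ^ k = β ^ k → (q ^ (2 * n) - 1) ∣ k :=
  stmt15_general q n L F hLcard β hβ γ hγ
end
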